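/- Let π be a Poisson tensor on ℝ^N, c a Casimir function for π, v and w Poisson vector fields for π, and λ ∈ ℝ. Then the bivector field (x,y) ↦ π_TM(x,y) + λ c(x) (v_V ∧ w_V)(x,y) is a Poisson tensor on ℝ^N × ℝ^N. -/

import Mathlib

open scoped BigOperators

/-- Partial derivative of `f : ℝ^N → ℝ` in the `s`-th coordinate direction. -/
noncomputable def pd {N : ℕ} (f : (Fin N → ℝ) → ℝ) (s : Fin N) (x : Fin N → ℝ) : ℝ :=
  fderiv ℝ f x (Pi.single s 1)

/-- Coordinate direction on `ℝ^N × ℝ^N` indexed by `Fin N ⊕ Fin N`. -/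
noncomputable def dir (N : ℕ) (a : Fin N ⊕ Fin N) : (Fin N → ℝ) × (Fin N → ℝ) :=
  Sum.elim (fun i => (Pi.single i 1, 0)) (fun i => (0, Pi.single i 1)) a

/-- Partial derivative on `ℝ^N × ℝ^N` in the `a`-th coordinate direction. -/
noncomputable def pdT {N : ℕ} (F : (Fin N → ℝ) × (Fin N → ℝ) → ℝ)
    (a : Fin N ⊕ Fin N) (z : (Fin N → ℝ) × (Fin N → ℝ)) : ℝ :=
  fderiv ℝ F z (dir N a)

/-- `π` is a Poisson tensor on `ℝ^N`: a smooth antisymmetric bivector field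
satisfying the Jacobi identity. -/
def IsPoisson {N : ℕ} (π : (Fin N → ℝ) → Matrix (Fin N) (Fin N) ℝ) : Prop :=
  (∀ i j, ContDiff ℝ (⊤ : ℕ∞) fun x => π x i j) ∧
  (∀ x i j, π x j i = - π x i j) ∧
  (∀ x i j k, ∑ s, (π x i s * pd (fun x => π x j k) s x
      + π x j s * pd (fun x => π x k i) s x
      + π x k s * pd (fun x => π x i j) s x) = 0)

/-- `v` is a (smooth) Poisson vector field for `π` (i.e. `L_v π = 0`). -/
def IsPoissonVF {N : ℕ} (π : (Fin N → ℝ) → Matrix (Fin N) (Fin N) ℝ)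
    (v : (Fin N → ℝ) → Fin N → ℝ) : Prop :=
  (∀ i, ContDiff ℝ (⊤ : ℕ∞) fun x => v x i) ∧
  (∀ x i j, ∑ s, (pd (fun x => π x i j) s x * v x s
      - π x s j * pd (fun x => v x i) s x
      - π x i s * pd (fun x => v x j) s x) = 0)

/-- The tangent lift `π_TM` of `π` to `ℝ^N × ℝ^N`. -/
noncomputable def tlift {N : ℕ} (π : (Fin N → ℝ) → Matrix (Fin N) (Fin N) ℝ)
    (z : (Fin N → ℝ) × (Fin N → ℝ)) : Matrix (Fin N ⊕ Fin N) (Fin N ⊕ Fin N) ℝ :=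
  Matrix.of fun a b =>
    match a, b with
    | Sum.inl _, Sum.inl _ => 0
    | Sum.inl i, Sum.inr j => π z.1 i j
    | Sum.inr i, Sum.inl j => π z.1 i j
    | Sum.inr i, Sum.inr j => ∑ s, pd (fun x => π x i j) s z.1 * z.2 s

/-- The complete lift `v_C` of a vector field `v`. -/
noncomputable def liftC {N : ℕ} (v : (Fin N → ℝ) → Fin N → ℝ)
    (z : (Fin N → ℝ) × (Fin N → ℝ)) : Fin N ⊕ Fin N → ℝ :=
  Sum.elim (fun i => v z.1 i) (fun i => ∑ s, pd (fun x => v x i) s z.1 * z.2 s)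

/-- The vertical lift `v_V` of a vector field `v`. -/
def liftV {N : ℕ} (v : (Fin N → ℝ) → Fin N → ℝ)
    (z : (Fin N → ℝ) × (Fin N → ℝ)) : Fin N ⊕ Fin N → ℝ :=
  Sum.elim (fun _ => 0) (fun i => v z.1 i)

/-- The wedge `u ∧ w` of two vector fields, as a bivector field. -/
def wedge {Z ι : Type*} (u w : Z → ι → ℝ) (z : Z) : Matrix ι ι ℝ :=
  Matrix.of fun a b => u z a * w z b - u z b * w z a

/-- A Poisson tensor on `ℝ^N × ℝ^N`: a smooth antisymmetric bivector field
satisfying the Jacobi identity. -/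
def IsPoissonT {N : ℕ}
    (P : (Fin N → ℝ) × (Fin N → ℝ) → Matrix (Fin N ⊕ Fin N) (Fin N ⊕ Fin N) ℝ) : Prop :=
  (∀ a b, ContDiff ℝ (⊤ : ℕ∞) fun z => P z a b) ∧
  (∀ z a b, P z b a = - P z a b) ∧
  (∀ z a b c, ∑ s, (P z a s * pdT (fun z => P z b c) s z
      + P z b s * pdT (fun z => P z c a) s z
      + P z c s * pdT (fun z => P z a b) s z) = 0)

/-- `c` is a Casimir function for `π` on `ℝ^N`. -/
def IsCasimir {N : ℕ} (π : (Fin N → ℝ) → Matrix (Fin N) (Fin N) ℝ)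
    (c : (Fin N → ℝ) → ℝ) : Prop :=
  ContDiff ℝ (⊤ : ℕ∞) c ∧ ∀ x j, ∑ i, pd c i x * π x i j = 0

/-- `F` is a Casimir function for the bivector field `P` on `ℝ^N × ℝ^N`. -/
def IsCasimirT {N : ℕ}
    (P : (Fin N → ℝ) × (Fin N → ℝ) → Matrix (Fin N ⊕ Fin N) (Fin N ⊕ Fin N) ℝ)
    (F : (Fin N → ℝ) × (Fin N → ℝ) → ℝ) : Prop :=
  ∀ z b, ∑ a, pdT F a z * P z a b = 0

/-- `f ∘ q : ℝ^N × ℝ^N → ℝ`. -/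
def fq {N : ℕ} (f : (Fin N → ℝ) → ℝ) (z : (Fin N → ℝ) × (Fin N → ℝ)) : ℝ := f z.1

/-- The fiber-wise linear function `l_{df}` on `ℝ^N × ℝ^N`. -/
noncomputable def ldf {N : ℕ} (f : (Fin N → ℝ) → ℝ) (z : (Fin N → ℝ) × (Fin N → ℝ)) : ℝ :=
  ∑ s, pd f s z.1 * z.2 s

/-- The commutator `[v,w]` of two vector fields on `ℝ^N`. -/
noncomputable def vbr {N : ℕ} (v w : (Fin N → ℝ) → Fin N → ℝ)
    (x : Fin N → ℝ) (i : Fin N) : ℝ :=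
  ∑ s, (v x s * pd (fun x => w x i) s x - w x s * pd (fun x => v x i) s x)

section Helpers

variable {N : ℕ}

private lemma contDiff_pd {f : (Fin N → ℝ) → ℝ} (hf : ContDiff ℝ (⊤ : ℕ∞) f) (s : Fin N) :
    ContDiff ℝ (⊤ : ℕ∞) (pd f s) := by
  have h1 : ContDiff ℝ (⊤ : ℕ∞) (fderiv ℝ f) := hf.fderiv_right (by simp)
  exact (ContinuousLinearMap.apply ℝ ℝ (Pi.single s 1)).contDiff.comp h1

private lemma pd_clairaut {f : (Fin N → ℝ) → ℝ} (hf : ContDiff ℝ (⊤ : ℕ∞) f) (s t : Fin N)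
    (x : Fin N → ℝ) : pd (pd f s) t x = pd (pd f t) s x := by
  have h1 : ContDiff ℝ (⊤ : ℕ∞) (fderiv ℝ f) := hf.fderiv_right (by simp)
  have hsymm := (hf.contDiffAt (x := x)).isSymmSndFDerivAt (by rw [minSmoothness_of_isRCLikeNormedField]; exact WithTop.coe_le_coe.mpr le_top)
  have happ : ∀ (u : Fin N → ℝ), fderiv ℝ (fun y => fderiv ℝ f y u) x
      = (ContinuousLinearMap.apply ℝ ℝ u).comp (fderiv ℝ (fderiv ℝ f) x) := by
    intro u
    exact (((ContinuousLinearMap.apply ℝ ℝ u).hasFDerivAt).comp x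
      ((h1.differentiable (by simp) x).hasFDerivAt)).fderiv
  show fderiv ℝ (fun y => fderiv ℝ f y (Pi.single s 1)) x (Pi.single t 1)
      = fderiv ℝ (fun y => fderiv ℝ f y (Pi.single t 1)) x (Pi.single s 1)
  rw [happ, happ]
  exact hsymm (Pi.single t 1) (Pi.single s 1)

private lemma pd_sum {ι : Type*} {x : Fin N → ℝ} (u : Finset ι) (f : ι → (Fin N → ℝ) → ℝ)
    (hf : ∀ i, DifferentiableAt ℝ (f i) x) (t : Fin N) :
    pd (fun x => ∑ i ∈ u, f i x) t x = ∑ i ∈ u, pd (f i) t x := by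
  show fderiv ℝ _ x _ = _
  rw [fderiv_fun_sum (fun i _ => hf i)]
  simp [pd]

private lemma pd_mul {f g : (Fin N → ℝ) → ℝ} {x} (hf : DifferentiableAt ℝ f x)
    (hg : DifferentiableAt ℝ g x) (t : Fin N) :
    pd (fun x => f x * g x) t x = f x * pd g t x + g x * pd f t x := by
  show fderiv ℝ _ x _ = _
  rw [fderiv_fun_mul hf hg]
  simp [pd]

private lemma pd_add {f g : (Fin N → ℝ) → ℝ} {x} (hf : DifferentiableAt ℝ f x)
    (hg : DifferentiableAt ℝ g x) (t : Fin N) :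
    pd (fun x => f x + g x) t x = pd f t x + pd g t x := by
  show fderiv ℝ _ x _ = _
  rw [fderiv_fun_add hf hg]
  simp [pd]

private lemma pd_sub {f g : (Fin N → ℝ) → ℝ} {x} (hf : DifferentiableAt ℝ f x)
    (hg : DifferentiableAt ℝ g x) (t : Fin N) :
    pd (fun x => f x - g x) t x = pd f t x - pd g t x := by
  show fderiv ℝ _ x _ = _
  rw [fderiv_fun_sub hf hg]
  simp [pd]

private lemma pd_const_mul {f : (Fin N → ℝ) → ℝ} {x} (hf : DifferentiableAt ℝ f x)
    (r : ℝ) (t : Fin N) :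
    pd (fun x => r * f x) t x = r * pd f t x := by
  show fderiv ℝ _ x _ = _
  rw [fderiv_const_mul hf]
  simp [pd]

private lemma pd_zero_fun (t : Fin N) (x : Fin N → ℝ) :
    pd (fun _ => (0 : ℝ)) t x = 0 := by
  show fderiv ℝ _ x _ = _
  rw [fderiv_const_apply]
  simp

private lemma hasfd_fst {g : (Fin N → ℝ) → ℝ} {z : (Fin N → ℝ) × (Fin N → ℝ)}
    (hg : DifferentiableAt ℝ g z.1) :
    HasFDerivAt (fun z : (Fin N → ℝ) × (Fin N → ℝ) => g z.1)
      ((fderiv ℝ g z.1).comp (ContinuousLinearMap.fst ℝ _ _)) z :=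
  hg.hasFDerivAt.comp z hasFDerivAt_fst

private lemma pdT_fst {g : (Fin N → ℝ) → ℝ} (hg : ContDiff ℝ (⊤ : ℕ∞) g) (a : Fin N ⊕ Fin N)
    (z : (Fin N → ℝ) × (Fin N → ℝ)) :
    pdT (fun z => g z.1) a z = Sum.elim (fun t => pd g t z.1) (fun _ => 0) a := by
  have h := (hasfd_fst (z := z) (hg.differentiable (by simp) z.1)).fderiv
  show fderiv ℝ _ z _ = _
  rw [h]
  cases a <;> simp [dir, pd]

private lemma pdT_zero (a : Fin N ⊕ Fin N) (z : (Fin N → ℝ) × (Fin N → ℝ)) :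
    pdT (fun _ => (0 : ℝ)) a z = 0 := by
  show fderiv ℝ _ z _ = _
  rw [fderiv_const_apply]
  simp

private lemma pdT_master (f : Fin N → (Fin N → ℝ) → ℝ) (hf : ∀ s, ContDiff ℝ (⊤ : ℕ∞) (f s))
    {g : (Fin N → ℝ) → ℝ} (hg : ContDiff ℝ (⊤ : ℕ∞) g) (a : Fin N ⊕ Fin N)
    (z : (Fin N → ℝ) × (Fin N → ℝ)) :
    pdT (fun z => (∑ s, f s z.1 * z.2 s) + g z.1) a z =
      Sum.elim (fun t => (∑ s, pd (f s) t z.1 * z.2 s) + pd g t z.1)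
        (fun t => f t z.1) a := by
  have hterm : ∀ s : Fin N, HasFDerivAt (fun z : (Fin N → ℝ) × (Fin N → ℝ) => f s z.1 * z.2 s)
      ((f s z.1) • ((ContinuousLinearMap.proj s).comp (ContinuousLinearMap.snd ℝ _ _))
        + (z.2 s) • ((fderiv ℝ (f s) z.1).comp (ContinuousLinearMap.fst ℝ _ _))) z := by
    intro s
    have hsnd : HasFDerivAt (fun z : (Fin N → ℝ) × (Fin N → ℝ) => z.2 s)
        ((ContinuousLinearMap.proj s).comp (ContinuousLinearMap.snd ℝ _ _)) z :=
      (ContinuousLinearMap.proj (R := ℝ) (φ := fun _ : Fin N => ℝ) s).hasFDerivAt.comp z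
        hasFDerivAt_snd
    exact (hasfd_fst ((hf s).differentiable (by simp) z.1)).mul hsnd
  have hsum := HasFDerivAt.fun_sum (fun s (_ : s ∈ Finset.univ) => hterm s)
  have h := (hsum.fun_add (hasfd_fst (hg.differentiable (by simp) z.1))).fderiv
  show fderiv ℝ _ z _ = _
  rw [h]
  cases a with
  | inl t =>
      simp [dir, pd, Pi.single_apply]
      exact Finset.sum_congr rfl fun _ _ => mul_comm _ _
  | inr t =>
      simp [dir, pd, Pi.single_apply, mul_ite, Finset.sum_ite_eq']

end Helpers


/-- `π_TM + λ c (v_V ∧ w_V)` is a Poisson tensor on `ℝ^N × ℝ^N`. -/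
theorem deformation_liftV_liftV_is_poisson {N : ℕ}
    (π : (Fin N → ℝ) → Matrix (Fin N) (Fin N) ℝ) (c : (Fin N → ℝ) → ℝ)
    (v w : (Fin N → ℝ) → Fin N → ℝ) (l : ℝ)
    (hπ : IsPoisson π) (hc : IsCasimir π c)
    (hv : IsPoissonVF π v) (hw : IsPoissonVF π w) :
    IsPoissonT (fun z => tlift π z + (l * c z.1) • wedge (liftV v) (liftV w) z) := by
  obtain ⟨hπs, hπa, hπJ⟩ := hπ
  obtain ⟨hcs, hcc⟩ := hc
  obtain ⟨hvs, hvP⟩ := hv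
  obtain ⟨hws, hwP⟩ := hw
  have dπ : ∀ (i j : Fin N) (x : Fin N → ℝ), DifferentiableAt ℝ (fun x => π x i j) x :=
    fun i j x => ((hπs i j).differentiable (by simp)) x
  have dpπ : ∀ (i j s : Fin N) (x : Fin N → ℝ),
      DifferentiableAt ℝ (pd (fun x => π x i j) s) x :=
    fun i j s x => ((contDiff_pd (hπs i j) s).differentiable (by simp)) x
  have dv : ∀ (i : Fin N) (x : Fin N → ℝ), DifferentiableAt ℝ (fun x => v x i) x :=
    fun i x => ((hvs i).differentiable (by simp)) x
  have dw : ∀ (i : Fin N) (x : Fin N → ℝ), DifferentiableAt ℝ (fun x => w x i) x :=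
    fun i x => ((hws i).differentiable (by simp)) x
  have dc : ∀ (x : Fin N → ℝ), DifferentiableAt ℝ c x :=
    fun x => (hcs.differentiable (by simp)) x
  have hgW : ∀ i j : Fin N,
      ContDiff ℝ (⊤ : ℕ∞) (fun x => l * c x * (v x i * w x j - v x j * w x i)) :=
    fun i j => (contDiff_const.mul hcs).mul (((hvs i).mul (hws j)).sub ((hvs j).mul (hws i)))
  -- component formulas
  have e_ll : ∀ (z : (Fin N → ℝ) × (Fin N → ℝ)) (i j : Fin N),
      (tlift π z + (l * c z.1) • wedge (liftV v) (liftV w) z) (Sum.inl i) (Sum.inl j)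
        = 0 := by
    intro z i j
    simp [tlift, wedge, liftV, Matrix.add_apply, Matrix.smul_apply]
  have e_lr : ∀ (z : (Fin N → ℝ) × (Fin N → ℝ)) (i j : Fin N),
      (tlift π z + (l * c z.1) • wedge (liftV v) (liftV w) z) (Sum.inl i) (Sum.inr j)
        = π z.1 i j := by
    intro z i j
    simp [tlift, wedge, liftV, Matrix.add_apply, Matrix.smul_apply]
  have e_rl : ∀ (z : (Fin N → ℝ) × (Fin N → ℝ)) (i j : Fin N),
      (tlift π z + (l * c z.1) • wedge (liftV v) (liftV w) z) (Sum.inr i) (Sum.inl j)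
        = π z.1 i j := by
    intro z i j
    simp [tlift, wedge, liftV, Matrix.add_apply, Matrix.smul_apply]
  have e_rr : ∀ (z : (Fin N → ℝ) × (Fin N → ℝ)) (i j : Fin N),
      (tlift π z + (l * c z.1) • wedge (liftV v) (liftV w) z) (Sum.inr i) (Sum.inr j)
        = (∑ s, pd (fun x => π x i j) s z.1 * z.2 s)
          + l * c z.1 * (v z.1 i * w z.1 j - v z.1 j * w z.1 i) := by
    intro z i j
    simp [tlift, wedge, liftV, Matrix.add_apply, Matrix.smul_apply]
  -- pdT of the components
  have pdTπl : ∀ (i j t : Fin N) (z : (Fin N → ℝ) × (Fin N → ℝ)),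
      pdT (fun z => π z.1 i j) (Sum.inl t) z = pd (fun x => π x i j) t z.1 :=
    fun i j t z => pdT_fst (hπs i j) _ z
  have pdTπr : ∀ (i j t : Fin N) (z : (Fin N → ℝ) × (Fin N → ℝ)),
      pdT (fun z => π z.1 i j) (Sum.inr t) z = 0 :=
    fun i j t z => pdT_fst (hπs i j) _ z
  have pdTRl : ∀ (i j t : Fin N) (z : (Fin N → ℝ) × (Fin N → ℝ)),
      pdT (fun z => (∑ s, pd (fun x => π x i j) s z.1 * z.2 s)
          + l * c z.1 * (v z.1 i * w z.1 j - v z.1 j * w z.1 i)) (Sum.inl t) z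
        = (∑ s, pd (pd (fun x => π x i j) s) t z.1 * z.2 s)
          + pd (fun x => l * c x * (v x i * w x j - v x j * w x i)) t z.1 :=
    fun i j t z => pdT_master (pd (fun x => π x i j))
      (fun s => contDiff_pd (hπs i j) s) (hgW i j) _ z
  have pdTRr : ∀ (i j t : Fin N) (z : (Fin N → ℝ) × (Fin N → ℝ)),
      pdT (fun z => (∑ s, pd (fun x => π x i j) s z.1 * z.2 s)
          + l * c z.1 * (v z.1 i * w z.1 j - v z.1 j * w z.1 i)) (Sum.inr t) z
        = pd (fun x => π x i j) t z.1 :=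
    fun i j t z => pdT_master (pd (fun x => π x i j))
      (fun s => contDiff_pd (hπs i j) s) (hgW i j) _ z
  have hpdanti : ∀ (i j s : Fin N) (x : Fin N → ℝ),
      pd (fun x => π x j i) s x = - pd (fun x => π x i j) s x := by
    intro i j s x
    have hfe : (fun x => π x j i) = fun x => -(π x i j) := funext fun x => hπa x i j
    rw [hfe]
    show fderiv ℝ _ x _ = _
    rw [fderiv_fun_neg]
    simp [pd]
  refine ⟨?_, ?_, ?_⟩
  · -- smoothness
    intro a b
    rcases a with i | i <;> rcases b with j | j
    · have he : (fun z : (Fin N → ℝ) × (Fin N → ℝ) =>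
          (tlift π z + (l * c z.1) • wedge (liftV v) (liftV w) z) (Sum.inl i) (Sum.inl j))
          = fun _ => (0 : ℝ) := funext fun z => e_ll z i j
      rw [he]; exact contDiff_const
    · have he : (fun z : (Fin N → ℝ) × (Fin N → ℝ) =>
          (tlift π z + (l * c z.1) • wedge (liftV v) (liftV w) z) (Sum.inl i) (Sum.inr j))
          = fun z => π z.1 i j := funext fun z => e_lr z i j
      rw [he]; exact (hπs i j).comp contDiff_fst
    · have he : (fun z : (Fin N → ℝ) × (Fin N → ℝ) =>
          (tlift π z + (l * c z.1) • wedge (liftV v) (liftV w) z) (Sum.inr i) (Sum.inl j))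
          = fun z => π z.1 i j := funext fun z => e_rl z i j
      rw [he]; exact (hπs i j).comp contDiff_fst
    · have he : (fun z : (Fin N → ℝ) × (Fin N → ℝ) =>
          (tlift π z + (l * c z.1) • wedge (liftV v) (liftV w) z) (Sum.inr i) (Sum.inr j))
          = fun z => (∑ s, pd (fun x => π x i j) s z.1 * z.2 s)
              + l * c z.1 * (v z.1 i * w z.1 j - v z.1 j * w z.1 i) :=
        funext fun z => e_rr z i j
      rw [he]
      exact (ContDiff.sum fun s _ =>
        ((contDiff_pd (hπs i j) s).comp contDiff_fst).mul ((contDiff_pi.mp contDiff_snd) s)).add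
        ((hgW i j).comp contDiff_fst)
  · -- antisymmetry
    intro z a b
    rcases a with i | i <;> rcases b with j | j
    · simp only [e_ll]; ring
    · simp only [e_rl, e_lr]; exact hπa z.1 i j
    · simp only [e_rl, e_lr]; exact hπa z.1 i j
    · simp only [e_rr]
      have hs : (∑ s, pd (fun x => π x j i) s z.1 * z.2 s)
          = -∑ s, pd (fun x => π x i j) s z.1 * z.2 s := by
        rw [← Finset.sum_neg_distrib]
        exact Finset.sum_congr rfl fun s _ => by rw [hpdanti i j s]; ring
      rw [hs]; ring
  · -- Jacobi identity
    intro z a b d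
    rcases a with i | i <;> rcases b with j | j <;> rcases d with k | k
    · rw [Fintype.sum_sum_type]
      simp only [e_ll, e_lr, e_rl, e_rr, pdTπl, pdTπr, pdTRl, pdTRr, pdT_zero,
        zero_mul, mul_zero, add_zero, zero_add]
      simp
    · rw [Fintype.sum_sum_type]
      simp only [e_ll, e_lr, e_rl, e_rr, pdTπl, pdTπr, pdTRl, pdTRr, pdT_zero,
        zero_mul, mul_zero, add_zero, zero_add]
      simp
    · rw [Fintype.sum_sum_type]
      simp only [e_ll, e_lr, e_rl, e_rr, pdTπl, pdTπr, pdTRl, pdTRr, pdT_zero,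
        zero_mul, mul_zero, add_zero, zero_add]
      simp
    · -- (l, r, r)
      rw [Fintype.sum_sum_type]
      simp only [e_ll, e_lr, e_rl, e_rr, pdTπl, pdTπr, pdTRl, pdTRr, pdT_zero,
        zero_mul, mul_zero, add_zero, zero_add]
      rw [← Finset.sum_add_distrib, ← hπJ z.1 i j k]
      exact Finset.sum_congr rfl fun s _ => by ring
    · rw [Fintype.sum_sum_type]
      simp only [e_ll, e_lr, e_rl, e_rr, pdTπl, pdTπr, pdTRl, pdTRr, pdT_zero,
        zero_mul, mul_zero, add_zero, zero_add]
      simp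
    · -- (r, l, r)
      rw [Fintype.sum_sum_type]
      simp only [e_ll, e_lr, e_rl, e_rr, pdTπl, pdTπr, pdTRl, pdTRr, pdT_zero,
        zero_mul, mul_zero, add_zero, zero_add]
      rw [← Finset.sum_add_distrib, ← hπJ z.1 i j k]
      exact Finset.sum_congr rfl fun s _ => by ring
    · -- (r, r, l)
      rw [Fintype.sum_sum_type]
      simp only [e_ll, e_lr, e_rl, e_rr, pdTπl, pdTπr, pdTRl, pdTRr, pdT_zero,
        zero_mul, mul_zero, add_zero, zero_add]
      rw [← Finset.sum_add_distrib, ← hπJ z.1 i j k]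
    · -- (r, r, r)
      rw [Fintype.sum_sum_type]
      simp only [e_ll, e_lr, e_rl, e_rr, pdTπl, pdTπr, pdTRl, pdTRr, pdT_zero,
        zero_mul, mul_zero, add_zero, zero_add]
      -- expand the derivatives of the deformation term
      have hpdg : ∀ (a b t : Fin N) (x : Fin N → ℝ),
          pd (fun x => l * c x * (v x a * w x b - v x b * w x a)) t x
            = l * pd c t x * (v x a * w x b - v x b * w x a)
              + l * c x * (pd (fun x => v x a) t x * w x b + v x a * pd (fun x => w x b) t x
                - (pd (fun x => v x b) t x * w x a + v x b * pd (fun x => w x a) t x)) := by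
        intro a b t x
        rw [pd_mul (f := fun x => l * c x) (g := fun x => v x a * w x b - v x b * w x a)
            ((dc x).const_mul l) (((dv a x).mul (dw b x)).sub ((dv b x).mul (dw a x))) t,
          pd_sub (f := fun x => v x a * w x b) (g := fun x => v x b * w x a)
            ((dv a x).mul (dw b x)) ((dv b x).mul (dw a x)) t,
          pd_mul (dv a x) (dw b x) t, pd_mul (dv b x) (dw a x) t,
          pd_const_mul (dc x) l t]
        ring
      simp only [hpdg]
      rw [← Finset.sum_add_distrib]
      -- the differentiated Jacobi identity
      have hJ' : ∀ t : Fin N, ∑ s : Fin N,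
          (pd (fun x => π x i s) t z.1 * pd (fun x => π x j k) s z.1
            + π z.1 i s * pd (pd (fun x => π x j k) t) s z.1
            + pd (fun x => π x j s) t z.1 * pd (fun x => π x k i) s z.1
            + π z.1 j s * pd (pd (fun x => π x k i) t) s z.1
            + pd (fun x => π x k s) t z.1 * pd (fun x => π x i j) s z.1
            + π z.1 k s * pd (pd (fun x => π x i j) t) s z.1) = 0 := by
        intro t
        have hdsum : ∀ s : Fin N, DifferentiableAt ℝ
            (fun x => π x i s * pd (fun x => π x j k) s x + π x j s * pd (fun x => π x k i) s x
              + π x k s * pd (fun x => π x i j) s x) z.1 :=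
          fun s => (((dπ i s z.1).mul (dpπ j k s z.1)).add
            ((dπ j s z.1).mul (dpπ k i s z.1))).add ((dπ k s z.1).mul (dpπ i j s z.1))
        have h0 : pd (fun x => ∑ s : Fin N,
            (π x i s * pd (fun x => π x j k) s x + π x j s * pd (fun x => π x k i) s x
              + π x k s * pd (fun x => π x i j) s x)) t z.1 = 0 := by
          have hz : (fun x => ∑ s : Fin N,
              (π x i s * pd (fun x => π x j k) s x + π x j s * pd (fun x => π x k i) s x
                + π x k s * pd (fun x => π x i j) s x)) = fun _ => (0 : ℝ) :=
            funext fun x => hπJ x i j k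
          rw [hz, pd_zero_fun]
        have h0' : (∑ s : Fin N, pd (fun x =>
            π x i s * pd (fun x => π x j k) s x + π x j s * pd (fun x => π x k i) s x
              + π x k s * pd (fun x => π x i j) s x) t z.1) = 0 := by
          rw [← pd_sum Finset.univ _ hdsum t]
          exact h0
        have h1 : ∀ s : Fin N, pd (fun x =>
            π x i s * pd (fun x => π x j k) s x + π x j s * pd (fun x => π x k i) s x
              + π x k s * pd (fun x => π x i j) s x) t z.1
            = pd (fun x => π x i s) t z.1 * pd (fun x => π x j k) s z.1
              + π z.1 i s * pd (pd (fun x => π x j k) t) s z.1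
              + pd (fun x => π x j s) t z.1 * pd (fun x => π x k i) s z.1
              + π z.1 j s * pd (pd (fun x => π x k i) t) s z.1
              + pd (fun x => π x k s) t z.1 * pd (fun x => π x i j) s z.1
              + π z.1 k s * pd (pd (fun x => π x i j) t) s z.1 := by
          intro s
          rw [pd_add (((dπ i s z.1).fun_mul (dpπ j k s z.1)).fun_add
                ((dπ j s z.1).fun_mul (dpπ k i s z.1))) ((dπ k s z.1).fun_mul (dpπ i j s z.1)) t,
            pd_add ((dπ i s z.1).fun_mul (dpπ j k s z.1)) ((dπ j s z.1).fun_mul (dpπ k i s z.1)) t,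
            pd_mul (dπ i s z.1) (dpπ j k s z.1) t,
            pd_mul (dπ j s z.1) (dpπ k i s z.1) t,
            pd_mul (dπ k s z.1) (dpπ i j s z.1) t,
            pd_clairaut (hπs j k) s t z.1, pd_clairaut (hπs k i) s t z.1,
            pd_clairaut (hπs i j) s t z.1]
          ring
        calc (∑ s : Fin N,
            (pd (fun x => π x i s) t z.1 * pd (fun x => π x j k) s z.1
              + π z.1 i s * pd (pd (fun x => π x j k) t) s z.1
              + pd (fun x => π x j s) t z.1 * pd (fun x => π x k i) s z.1
              + π z.1 j s * pd (pd (fun x => π x k i) t) s z.1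
              + pd (fun x => π x k s) t z.1 * pd (fun x => π x i j) s z.1
              + π z.1 k s * pd (pd (fun x => π x i j) t) s z.1))
            = ∑ s : Fin N, pd (fun x =>
              π x i s * pd (fun x => π x j k) s x + π x j s * pd (fun x => π x k i) s x
                + π x k s * pd (fun x => π x i j) s x) t z.1 :=
              Finset.sum_congr rfl fun s _ => (h1 s).symm
          _ = 0 := h0'
      -- Casimir contraction
      have hCas' : ∀ a : Fin N, ∑ s : Fin N, π z.1 a s * pd c s z.1 = 0 := by
        intro a
        have hmid : (∑ s : Fin N, π z.1 a s * pd c s z.1)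
            = ∑ s : Fin N, -(pd c s z.1 * π z.1 s a) :=
          Finset.sum_congr rfl fun s _ => by rw [hπa z.1 a s]; ring
        rw [hmid, Finset.sum_neg_distrib, hcc z.1 a, neg_zero]
      -- the Lie-derivative (Poisson vector field) contraction
      have hK : (∑ s : Fin N,
          (π z.1 i s * (pd (fun x => v x j) s z.1 * w z.1 k + v z.1 j * pd (fun x => w x k) s z.1
              - (pd (fun x => v x k) s z.1 * w z.1 j + v z.1 k * pd (fun x => w x j) s z.1))
            + π z.1 j s * (pd (fun x => v x k) s z.1 * w z.1 i + v z.1 k * pd (fun x => w x i) s z.1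
              - (pd (fun x => v x i) s z.1 * w z.1 k + v z.1 i * pd (fun x => w x k) s z.1))
            + π z.1 k s * (pd (fun x => v x i) s z.1 * w z.1 j + v z.1 i * pd (fun x => w x j) s z.1
              - (pd (fun x => v x j) s z.1 * w z.1 i + v z.1 j * pd (fun x => w x i) s z.1))
            + (v z.1 i * w z.1 s - v z.1 s * w z.1 i) * pd (fun x => π x j k) s z.1
            + (v z.1 j * w z.1 s - v z.1 s * w z.1 j) * pd (fun x => π x k i) s z.1
            + (v z.1 k * w z.1 s - v z.1 s * w z.1 k) * pd (fun x => π x i j) s z.1)) = 0 := by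
        have hmid : (∑ s : Fin N,
            (π z.1 i s * (pd (fun x => v x j) s z.1 * w z.1 k + v z.1 j * pd (fun x => w x k) s z.1
                - (pd (fun x => v x k) s z.1 * w z.1 j + v z.1 k * pd (fun x => w x j) s z.1))
              + π z.1 j s * (pd (fun x => v x k) s z.1 * w z.1 i + v z.1 k * pd (fun x => w x i) s z.1
                - (pd (fun x => v x i) s z.1 * w z.1 k + v z.1 i * pd (fun x => w x k) s z.1))
              + π z.1 k s * (pd (fun x => v x i) s z.1 * w z.1 j + v z.1 i * pd (fun x => w x j) s z.1
                - (pd (fun x => v x j) s z.1 * w z.1 i + v z.1 j * pd (fun x => w x i) s z.1))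
              + (v z.1 i * w z.1 s - v z.1 s * w z.1 i) * pd (fun x => π x j k) s z.1
              + (v z.1 j * w z.1 s - v z.1 s * w z.1 j) * pd (fun x => π x k i) s z.1
              + (v z.1 k * w z.1 s - v z.1 s * w z.1 k) * pd (fun x => π x i j) s z.1))
            = ∑ s : Fin N,
              (v z.1 i * (pd (fun x => π x j k) s z.1 * w z.1 s
                  - π z.1 s k * pd (fun x => w x j) s z.1 - π z.1 j s * pd (fun x => w x k) s z.1)
                - w z.1 i * (pd (fun x => π x j k) s z.1 * v z.1 s
                  - π z.1 s k * pd (fun x => v x j) s z.1 - π z.1 j s * pd (fun x => v x k) s z.1)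
                + v z.1 j * (pd (fun x => π x k i) s z.1 * w z.1 s
                  - π z.1 s i * pd (fun x => w x k) s z.1 - π z.1 k s * pd (fun x => w x i) s z.1)
                - w z.1 j * (pd (fun x => π x k i) s z.1 * v z.1 s
                  - π z.1 s i * pd (fun x => v x k) s z.1 - π z.1 k s * pd (fun x => v x i) s z.1)
                + v z.1 k * (pd (fun x => π x i j) s z.1 * w z.1 s
                  - π z.1 s j * pd (fun x => w x i) s z.1 - π z.1 i s * pd (fun x => w x j) s z.1)
                - w z.1 k * (pd (fun x => π x i j) s z.1 * v z.1 s
                  - π z.1 s j * pd (fun x => v x i) s z.1 - π z.1 i s * pd (fun x => v x j) s z.1)) :=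
          Finset.sum_congr rfl fun s _ => by
            rw [hπa z.1 k s, hπa z.1 i s, hπa z.1 j s]; ring
        rw [hmid]
        have hsplit : (∑ s : Fin N,
            (v z.1 i * (pd (fun x => π x j k) s z.1 * w z.1 s
                - π z.1 s k * pd (fun x => w x j) s z.1 - π z.1 j s * pd (fun x => w x k) s z.1)
              - w z.1 i * (pd (fun x => π x j k) s z.1 * v z.1 s
                - π z.1 s k * pd (fun x => v x j) s z.1 - π z.1 j s * pd (fun x => v x k) s z.1)
              + v z.1 j * (pd (fun x => π x k i) s z.1 * w z.1 s
                - π z.1 s i * pd (fun x => w x k) s z.1 - π z.1 k s * pd (fun x => w x i) s z.1)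
              - w z.1 j * (pd (fun x => π x k i) s z.1 * v z.1 s
                - π z.1 s i * pd (fun x => v x k) s z.1 - π z.1 k s * pd (fun x => v x i) s z.1)
              + v z.1 k * (pd (fun x => π x i j) s z.1 * w z.1 s
                - π z.1 s j * pd (fun x => w x i) s z.1 - π z.1 i s * pd (fun x => w x j) s z.1)
              - w z.1 k * (pd (fun x => π x i j) s z.1 * v z.1 s
                - π z.1 s j * pd (fun x => v x i) s z.1 - π z.1 i s * pd (fun x => v x j) s z.1)))
            = v z.1 i * (∑ s : Fin N, (pd (fun x => π x j k) s z.1 * w z.1 s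
                - π z.1 s k * pd (fun x => w x j) s z.1 - π z.1 j s * pd (fun x => w x k) s z.1))
              - w z.1 i * (∑ s : Fin N, (pd (fun x => π x j k) s z.1 * v z.1 s
                - π z.1 s k * pd (fun x => v x j) s z.1 - π z.1 j s * pd (fun x => v x k) s z.1))
              + v z.1 j * (∑ s : Fin N, (pd (fun x => π x k i) s z.1 * w z.1 s
                - π z.1 s i * pd (fun x => w x k) s z.1 - π z.1 k s * pd (fun x => w x i) s z.1))
              - w z.1 j * (∑ s : Fin N, (pd (fun x => π x k i) s z.1 * v z.1 s
                - π z.1 s i * pd (fun x => v x k) s z.1 - π z.1 k s * pd (fun x => v x i) s z.1))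
              + v z.1 k * (∑ s : Fin N, (pd (fun x => π x i j) s z.1 * w z.1 s
                - π z.1 s j * pd (fun x => w x i) s z.1 - π z.1 i s * pd (fun x => w x j) s z.1))
              - w z.1 k * (∑ s : Fin N, (pd (fun x => π x i j) s z.1 * v z.1 s
                - π z.1 s j * pd (fun x => v x i) s z.1 - π z.1 i s * pd (fun x => v x j) s z.1)) := by
          rw [Finset.mul_sum, Finset.mul_sum, Finset.mul_sum, Finset.mul_sum, Finset.mul_sum,
            Finset.mul_sum, ← Finset.sum_sub_distrib, ← Finset.sum_add_distrib,
            ← Finset.sum_sub_distrib, ← Finset.sum_add_distrib, ← Finset.sum_sub_distrib]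
        rw [hsplit, hwP z.1 j k, hvP z.1 j k, hwP z.1 k i, hvP z.1 k i, hwP z.1 i j, hvP z.1 i j]
        ring
      -- mixing the inner sums of the Jacobi part
      have hinner : ∀ s : Fin N, (∑ t : Fin N, z.2 t *
          (pd (fun x => π x i s) t z.1 * pd (fun x => π x j k) s z.1
            + π z.1 i s * pd (pd (fun x => π x j k) t) s z.1
            + pd (fun x => π x j s) t z.1 * pd (fun x => π x k i) s z.1
            + π z.1 j s * pd (pd (fun x => π x k i) t) s z.1
            + pd (fun x => π x k s) t z.1 * pd (fun x => π x i j) s z.1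
            + π z.1 k s * pd (pd (fun x => π x i j) t) s z.1))
          = π z.1 i s * (∑ u : Fin N, pd (pd (fun x => π x j k) u) s z.1 * z.2 u)
            + π z.1 j s * (∑ u : Fin N, pd (pd (fun x => π x k i) u) s z.1 * z.2 u)
            + π z.1 k s * (∑ u : Fin N, pd (pd (fun x => π x i j) u) s z.1 * z.2 u)
            + (∑ u : Fin N, pd (fun x => π x i s) u z.1 * z.2 u) * pd (fun x => π x j k) s z.1
            + (∑ u : Fin N, pd (fun x => π x j s) u z.1 * z.2 u) * pd (fun x => π x k i) s z.1
            + (∑ u : Fin N, pd (fun x => π x k s) u z.1 * z.2 u) * pd (fun x => π x i j) s z.1 := by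
        intro s
        rw [Finset.mul_sum, Finset.mul_sum, Finset.mul_sum, Finset.sum_mul, Finset.sum_mul,
          Finset.sum_mul, ← Finset.sum_add_distrib, ← Finset.sum_add_distrib,
          ← Finset.sum_add_distrib, ← Finset.sum_add_distrib, ← Finset.sum_add_distrib]
        exact Finset.sum_congr rfl fun t _ => by ring
      -- the target reorganized
      have htarget : (∑ s : Fin N, ((∑ t : Fin N, z.2 t *
            (pd (fun x => π x i s) t z.1 * pd (fun x => π x j k) s z.1
              + π z.1 i s * pd (pd (fun x => π x j k) t) s z.1
              + pd (fun x => π x j s) t z.1 * pd (fun x => π x k i) s z.1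
              + π z.1 j s * pd (pd (fun x => π x k i) t) s z.1
              + pd (fun x => π x k s) t z.1 * pd (fun x => π x i j) s z.1
              + π z.1 k s * pd (pd (fun x => π x i j) t) s z.1))
          + l * c z.1 *
            (π z.1 i s * (pd (fun x => v x j) s z.1 * w z.1 k + v z.1 j * pd (fun x => w x k) s z.1
                - (pd (fun x => v x k) s z.1 * w z.1 j + v z.1 k * pd (fun x => w x j) s z.1))
              + π z.1 j s * (pd (fun x => v x k) s z.1 * w z.1 i + v z.1 k * pd (fun x => w x i) s z.1
                - (pd (fun x => v x i) s z.1 * w z.1 k + v z.1 i * pd (fun x => w x k) s z.1))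
              + π z.1 k s * (pd (fun x => v x i) s z.1 * w z.1 j + v z.1 i * pd (fun x => w x j) s z.1
                - (pd (fun x => v x j) s z.1 * w z.1 i + v z.1 j * pd (fun x => w x i) s z.1))
              + (v z.1 i * w z.1 s - v z.1 s * w z.1 i) * pd (fun x => π x j k) s z.1
              + (v z.1 j * w z.1 s - v z.1 s * w z.1 j) * pd (fun x => π x k i) s z.1
              + (v z.1 k * w z.1 s - v z.1 s * w z.1 k) * pd (fun x => π x i j) s z.1)
          + l * (pd c s z.1 *
            (π z.1 i s * (v z.1 j * w z.1 k - v z.1 k * w z.1 j)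
              + π z.1 j s * (v z.1 k * w z.1 i - v z.1 i * w z.1 k)
              + π z.1 k s * (v z.1 i * w z.1 j - v z.1 j * w z.1 i))))) = 0 := by
        rw [Finset.sum_add_distrib, Finset.sum_add_distrib]
        have hA : (∑ s : Fin N, ∑ t : Fin N, z.2 t *
            (pd (fun x => π x i s) t z.1 * pd (fun x => π x j k) s z.1
              + π z.1 i s * pd (pd (fun x => π x j k) t) s z.1
              + pd (fun x => π x j s) t z.1 * pd (fun x => π x k i) s z.1
              + π z.1 j s * pd (pd (fun x => π x k i) t) s z.1
              + pd (fun x => π x k s) t z.1 * pd (fun x => π x i j) s z.1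
              + π z.1 k s * pd (pd (fun x => π x i j) t) s z.1)) = 0 := by
          rw [Finset.sum_comm]
          exact Finset.sum_eq_zero fun t _ => by rw [← Finset.mul_sum, hJ' t, mul_zero]
        have hC : (∑ s : Fin N, l * c z.1 *
            (π z.1 i s * (pd (fun x => v x j) s z.1 * w z.1 k + v z.1 j * pd (fun x => w x k) s z.1
                - (pd (fun x => v x k) s z.1 * w z.1 j + v z.1 k * pd (fun x => w x j) s z.1))
              + π z.1 j s * (pd (fun x => v x k) s z.1 * w z.1 i + v z.1 k * pd (fun x => w x i) s z.1
                - (pd (fun x => v x i) s z.1 * w z.1 k + v z.1 i * pd (fun x => w x k) s z.1))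
              + π z.1 k s * (pd (fun x => v x i) s z.1 * w z.1 j + v z.1 i * pd (fun x => w x j) s z.1
                - (pd (fun x => v x j) s z.1 * w z.1 i + v z.1 j * pd (fun x => w x i) s z.1))
              + (v z.1 i * w z.1 s - v z.1 s * w z.1 i) * pd (fun x => π x j k) s z.1
              + (v z.1 j * w z.1 s - v z.1 s * w z.1 j) * pd (fun x => π x k i) s z.1
              + (v z.1 k * w z.1 s - v z.1 s * w z.1 k) * pd (fun x => π x i j) s z.1)) = 0 := by
          rw [← Finset.mul_sum, hK, mul_zero]
        have hB : (∑ s : Fin N, l * (pd c s z.1 *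
            (π z.1 i s * (v z.1 j * w z.1 k - v z.1 k * w z.1 j)
              + π z.1 j s * (v z.1 k * w z.1 i - v z.1 i * w z.1 k)
              + π z.1 k s * (v z.1 i * w z.1 j - v z.1 j * w z.1 i)))) = 0 := by
          rw [← Finset.mul_sum]
          have hsplit2 : (∑ s : Fin N, pd c s z.1 *
              (π z.1 i s * (v z.1 j * w z.1 k - v z.1 k * w z.1 j)
                + π z.1 j s * (v z.1 k * w z.1 i - v z.1 i * w z.1 k)
                + π z.1 k s * (v z.1 i * w z.1 j - v z.1 j * w z.1 i)))
              = (v z.1 j * w z.1 k - v z.1 k * w z.1 j) * (∑ s : Fin N, π z.1 i s * pd c s z.1)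
                + (v z.1 k * w z.1 i - v z.1 i * w z.1 k) * (∑ s : Fin N, π z.1 j s * pd c s z.1)
                + (v z.1 i * w z.1 j - v z.1 j * w z.1 i) * (∑ s : Fin N, π z.1 k s * pd c s z.1) := by
            rw [Finset.mul_sum, Finset.mul_sum, Finset.mul_sum, ← Finset.sum_add_distrib,
              ← Finset.sum_add_distrib]
            exact Finset.sum_congr rfl fun s _ => by ring
          rw [hsplit2, hCas' i, hCas' j, hCas' k]
          ring
        rw [hA, hC, hB]
        ring
      rw [← htarget]
      exact Finset.sum_congr rfl fun s _ => by rw [hinner s]; ring
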